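/- The Laplace mechanism A(x) = S(x) + Z, where S has sensitivity Δ_S and Z is Laplace-distributed with scale b = Δ_S/ε, satisfies ε-differential privacy: for all neighboring databases x ~ x' and all measurable sets E, P(A(x) ∈ E) ≤ e^ε · P(A(x') ∈ E). -/
import Mathlib


open MeasureTheory

/-- The Laplace distribution with scale `b`, given by density `(1/(2b)) exp(-|z|/b)`. -/
noncomputable def laplaceMeasure (b : ℝ) : Measure ℝ :=
  volume.withDensity (fun z => ENNReal.ofReal ((1 / (2 * b)) * Real.exp (-|z| / b)))

/-- The Laplace mechanism `A(x) = S(x) + Z`, `Z ~ Lap(0, Δ/ε)`, is `ε`-DP for a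
statistic `S` of sensitivity `Δ`. -/
theorem stmt_1 {X : Type*} (N : X → X → Prop) (S : X → ℝ) (Δ ε : ℝ)
    (hΔ : 0 < Δ) (hε : 0 < ε)
    (hsens : ∀ x x', N x x' → |S x - S x'| ≤ Δ) :
    ∀ x x' (E : Set ℝ), N x x' → MeasurableSet E →
      (laplaceMeasure (Δ / ε)).map (fun z => S x + z) E ≤
        ENNReal.ofReal (Real.exp ε) * (laplaceMeasure (Δ / ε)).map (fun z => S x' + z) E := by
  intro x x' E hN hE
  set b : ℝ := Δ / ε with hb
  have hbpos : 0 < b := div_pos hΔ hε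
  set f : ℝ → ENNReal := fun z => ENNReal.ofReal ((1 / (2 * b)) * Real.exp (-|z| / b)) with hf
  set d : ℝ := S x - S x' with hd
  have hdle : |d| ≤ Δ := hsens x x' hN
  have hm : Measurable fun z : ℝ => S x + z := measurable_const_add _
  have hm' : Measurable fun z : ℝ => S x' + z := measurable_const_add _
  rw [Measure.map_apply hm hE, Measure.map_apply hm' hE]
  set A : Set ℝ := (fun z => S x + z) ⁻¹' E with hA_def
  set A' : Set ℝ := (fun z : ℝ => S x' + z) ⁻¹' E with hA'_def
  have hA : MeasurableSet A := hm hE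
  have hA' : MeasurableSet A' := hm' hE
  rw [laplaceMeasure, withDensity_apply _ hA, withDensity_apply _ hA']
  have hεb : ε * b = Δ := by
    rw [hb]; field_simp
  have hpt : ∀ z : ℝ, f z ≤ ENNReal.ofReal (Real.exp ε) * f (z + d) := by
    intro z
    rw [hf]
    rw [← ENNReal.ofReal_mul (Real.exp_nonneg ε)]
    apply ENNReal.ofReal_le_ofReal
    have h1 : |z + d| - |z| ≤ Δ := by
      have h := abs_sub_abs_le_abs_sub (z + d) z
      have hzz : z + d - z = d := by ring
      rw [hzz] at h
      exact h.trans hdle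
    have h3 : |z + d| / b - |z| / b ≤ ε := by
      rw [← sub_div, div_le_iff₀ hbpos]
      linarith [hεb]
    calc (1 / (2 * b)) * Real.exp (-|z| / b)
        ≤ (1 / (2 * b)) * (Real.exp ε * Real.exp (-|z + d| / b)) := by
          apply mul_le_mul_of_nonneg_left _ (by positivity)
          rw [← Real.exp_add]
          apply Real.exp_le_exp.mpr
          rw [neg_div, neg_div]
          linarith
      _ = Real.exp ε * ((1 / (2 * b)) * Real.exp (-|z + d| / b)) := by ring
  have key : ∫⁻ z in A', f z = ∫⁻ z in A, f (z + d) := by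
    rw [← lintegral_indicator hA' f, ← lintegral_indicator hA fun z => f (z + d)]
    rw [← lintegral_add_right_eq_self (fun z => A'.indicator f z) d]
    congr 1; ext z
    have hz : S x' + (z + d) = S x + z := by rw [hd]; ring
    have hmem : z + d ∈ A' ↔ z ∈ A := by
      simp only [hA'_def, hA_def, Set.mem_preimage, hz]
    by_cases h : z ∈ A
    · rw [Set.indicator_of_mem (hmem.mpr h), Set.indicator_of_mem h]
    · rw [Set.indicator_of_notMem (fun h' => h (hmem.mp h')), Set.indicator_of_notMem h]
  calc ∫⁻ z in A, f z
      ≤ ∫⁻ z in A, ENNReal.ofReal (Real.exp ε) * f (z + d) := lintegral_mono fun z => hpt z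
    _ = ENNReal.ofReal (Real.exp ε) * ∫⁻ z in A, f (z + d) :=
        lintegral_const_mul' _ _ ENNReal.ofReal_ne_top
    _ = ENNReal.ofReal (Real.exp ε) * ∫⁻ z in A', f z := by rw [key]
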